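/- Let 0 ≤ α < π/2 and let A, B be n×n complex matrices whose numerical ranges are contained in the sector S_α. Then for every t ∈ [0,1], with r = min{t, 1−t}, in the Loewner order, ℜ(A !_t B) ≤ sec²(α)·( ℜ((1−t)A + tB) − 2r·( ℜ((A+B)/2) − (ℜA) ! (ℜB) ) ), where A !_t B = ((1−t)A^{-1} + tB^{-1})^{-1} and X ! Y = ((X^{-1}+Y^{-1})/2)^{-1}. -/

import Mathlib

open Matrix ComplexOrder

/-- The real part `ℜA = (A + A^*)/2` of a square complex matrix. -/
noncomputable def reMat {n : ℕ} (A : Matrix (Fin n) (Fin n) ℂ) : Matrix (Fin n) (Fin n) ℂ :=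
  (1 / 2 : ℝ) • (A + Aᴴ)

/-- The weighted harmonic mean `A !_t B = ((1-t)A⁻¹ + tB⁻¹)⁻¹`. -/
noncomputable def harmMean {n : ℕ} (A B : Matrix (Fin n) (Fin n) ℂ) (t : ℝ) :
    Matrix (Fin n) (Fin n) ℂ :=
  ((1 - t) • A⁻¹ + t • B⁻¹)⁻¹

/-- The numerical range of `A` is contained in the sector
`S_α = {z : ℜz > 0, |ℑz| ≤ tan(α)ℜz}`. -/
def SectorRange {n : ℕ} (α : ℝ) (A : Matrix (Fin n) (Fin n) ℂ) : Prop :=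
  ∀ x : Fin n → ℂ, x ≠ 0 →
    0 < (star x ⬝ᵥ (A *ᵥ x)).re ∧
      |(star x ⬝ᵥ (A *ᵥ x)).im| ≤ Real.tan α * (star x ⬝ᵥ (A *ᵥ x)).re

/-!
Write `H = ℜ A` and `K = ℑ A`, so that `A = H + iK` and `A H⁻¹ Aᴴ = H + K H⁻¹ K`. The sector
condition says `|x*Kx| ≤ tan α · x*Hx`; diagonalizing `H` and `K` simultaneously by congruence
turns this into `K H⁻¹ K ≤ tan² α · H`, and conjugating by `A⁻¹` gives
`(ℜ A)⁻¹ ≤ sec² α · ℜ (A⁻¹)`. For any `T` with `ℜ T > 0` the same identity gives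
`ℜ (T⁻¹) ≤ (ℜ T)⁻¹`. Taking `T = (1-t)A⁻¹ + tB⁻¹` and using that inversion is operator
antitone yields `ℜ (A !_t B) ≤ sec² α · (ℜ A !_t ℜ B)`.

The refined harmonic-arithmetic mean inequality
`H !_t K ≤ (1-t)H + tK - 2r((H+K)/2 - H ! K)` for positive definite `H`, `K` is invariant under
congruence, so it reduces to `H = 1` and `K` diagonal, i.e. to a scalar inequality whose two
sides differ by `(t(1-t-r) + (1-t)(t-r)x)(1-x)² / (((1-t)x+t)(1+x)) ≥ 0`.
-/

open scoped MatrixOrder ComplexStarModule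

theorem IsUnit.conjugate_le_conjugate_iff {R : Type*} [Ring R] [StarRing R] [PartialOrder R]
    [StarOrderedRing R] {u a b : R} (hu : IsUnit u) :
    u * a * star u ≤ u * b * star u ↔ a ≤ b := by
  rw [← sub_nonneg, ← sub_mul, ← mul_sub, hu.star_right_conjugate_nonneg_iff, sub_nonneg]

namespace Matrix

section RCLike

variable {𝕜 ι : Type*} [RCLike 𝕜]

theorem PosDef.of_le {P Q : Matrix ι ι 𝕜} (hP : P.PosDef) (h : P ≤ Q) : Q.PosDef := by
  simpa using hP.add_posSemidef (le_iff.mp h)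

theorem PosDef.smul_add_smul {P Q : Matrix ι ι 𝕜} (hP : P.PosDef) (hQ : Q.PosDef) {t : ℝ}
    (ht0 : 0 ≤ t) (ht1 : t ≤ 1) : ((1 - t) • P + t • Q).PosDef := by
  rcases ht1.lt_or_eq with ht1 | rfl
  · exact (hP.smul (sub_pos.mpr ht1)).add_posSemidef (hQ.posSemidef.smul ht0)
  · simpa using hQ

variable [DecidableEq ι]

theorem diagonal_ofReal_le_diagonal_ofReal {d e : ι → ℝ} (h : ∀ i, d i ≤ e i) :
    diagonal (fun i => (d i : ℂ)) ≤ diagonal (fun i => (e i : ℂ)) := by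
  rw [le_iff, diagonal_sub, posSemidef_diagonal_iff]
  intro i
  rw [← Complex.ofReal_sub]
  exact Complex.zero_le_real.mpr (sub_nonneg.mpr (h i))

variable [Fintype ι]

theorem nonsing_inv_conj_cancel {T : Matrix ι ι 𝕜} (hT : IsUnit T)
    (X : Matrix ι ι 𝕜) : T⁻¹ * (T * X * Tᴴ) * T⁻¹ᴴ = X := by
  have hTd := (isUnit_iff_isUnit_det T).mp hT
  rw [conjTranspose_nonsing_inv, Matrix.mul_assoc, Matrix.mul_assoc,
    mul_nonsing_inv _ (by simpa using hTd.star), Matrix.mul_one,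
    nonsing_inv_mul_cancel_left _ _ hTd]

theorem conj_mul_inv_mul {Y : Matrix ι ι 𝕜} (hY : IsUnit Y) (H K : Matrix ι ι 𝕜) :
    Y * (K * H⁻¹ * K) * Yᴴ = (Y * K * Yᴴ) * (Y * H * Yᴴ)⁻¹ * (Y * K * Yᴴ) := by
  have hYd := (isUnit_iff_isUnit_det Y).mp hY
  have hYd' : IsUnit Yᴴ.det := by simpa using hYd.star
  simp only [Matrix.mul_inv_rev, Matrix.mul_assoc, mul_nonsing_inv_cancel_left _ _ hYd',
    nonsing_inv_mul_cancel_left _ _ hYd]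

theorem star_dotProduct_mulVec_conjTranspose_single (Y M : Matrix ι ι 𝕜) (i : ι) :
    star (Yᴴ *ᵥ Pi.single i 1) ⬝ᵥ (M *ᵥ (Yᴴ *ᵥ Pi.single i 1)) = (Y * M * Yᴴ) i i := by
  rw [star_mulVec, conjTranspose_conjTranspose, ← dotProduct_mulVec, mulVec_mulVec, mulVec_mulVec]
  simp

theorem inv_diagonal_of_ne_zero {v : ι → 𝕜} (hv : ∀ i, v i ≠ 0) :
    (diagonal v)⁻¹ = diagonal (fun i => (v i)⁻¹) := by
  refine inv_eq_left_inv ?_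
  rw [diagonal_mul_diagonal, ← diagonal_one]
  exact congrArg diagonal (funext fun i => inv_mul_cancel₀ (hv i))

end RCLike

section Complex

variable {ι : Type*} [Fintype ι]

theorem star_dotProduct_conjTranspose_mulVec (A : Matrix ι ι ℂ) (x : ι → ℂ) :
    star x ⬝ᵥ (Aᴴ *ᵥ x) = star (star x ⬝ᵥ (A *ᵥ x)) := by
  rw [dotProduct_mulVec, ← star_mulVec, star_dotProduct]

theorem star_dotProduct_realPart_mulVec (A : Matrix ι ι ℂ) (x : ι → ℂ) :
    star x ⬝ᵥ ((ℜ A : Matrix ι ι ℂ) *ᵥ x) = (star x ⬝ᵥ (A *ᵥ x)).re := by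
  rw [realPart_apply_coe, star_eq_conjTranspose, smul_mulVec, dotProduct_smul, add_mulVec,
    dotProduct_add, star_dotProduct_conjTranspose_mulVec]
  apply Complex.ext <;> simp
  ring

theorem star_dotProduct_imaginaryPart_mulVec (A : Matrix ι ι ℂ) (x : ι → ℂ) :
    star x ⬝ᵥ ((ℑ A : Matrix ι ι ℂ) *ᵥ x) = (star x ⬝ᵥ (A *ᵥ x)).im := by
  rw [imaginaryPart_apply_coe, star_eq_conjTranspose, smul_mulVec, smul_mulVec, dotProduct_smul,
    dotProduct_smul, sub_mulVec, dotProduct_sub, star_dotProduct_conjTranspose_mulVec]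
  apply Complex.ext <;> simp
  ring

variable [DecidableEq ι]

theorem PosDef.exists_conj_eq_one_and_diagonal {H K : Matrix ι ι ℂ} (hH : H.PosDef)
    (hK : K.IsHermitian) :
    ∃ (Y : Matrix ι ι ℂ) (d : ι → ℝ), IsUnit Y ∧ Y * H * Yᴴ = 1 ∧
      Y * K * Yᴴ = diagonal (fun i => (d i : ℂ)) := by
  obtain ⟨B, hB, rfl⟩ :=
    CStarAlgebra.isStrictlyPositive_iff_eq_star_mul_self.mp hH.isStrictlyPositive
  have hBd := (isUnit_iff_isUnit_det B).mp hB
  have hBd' := (isUnit_iff_isUnit_det (star B)).mp hB.star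
  set Y₀ := (star B)⁻¹ with hY₀def
  have hY₀H : Y₀ * (star B * B) * Y₀ᴴ = 1 := by
    rw [hY₀def, conjTranspose_nonsing_inv, ← star_eq_conjTranspose, star_star, ← Matrix.mul_assoc,
      nonsing_inv_mul _ hBd', Matrix.one_mul, mul_nonsing_inv _ hBd]
  have hC : (Y₀ * K * Y₀ᴴ).IsHermitian := isHermitian_mul_mul_conjTranspose _ hK
  set U : Matrix ι ι ℂ := (hC.eigenvectorUnitary : Matrix ι ι ℂ)
  have hUU : star U * U = 1 := Unitary.star_mul_self_of_mem hC.eigenvectorUnitary.2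
  obtain ⟨d, hspec⟩ : ∃ d : ι → ℝ, Y₀ * K * Y₀ᴴ = U * diagonal (fun i => (d i : ℂ)) * star U :=
    ⟨hC.eigenvalues, hC.spectral_theorem.trans (Unitary.conjStarAlgAut_apply ..)⟩
  have hconj (M : Matrix ι ι ℂ) :
      (star U * Y₀) * M * (star U * Y₀)ᴴ = star U * (Y₀ * M * Y₀ᴴ) * U := by
    simp only [← star_eq_conjTranspose, star_mul, star_star, Matrix.mul_assoc]
  refine ⟨star U * Y₀, d, Unitary.isUnit_coe.star.mul (isUnit_nonsing_inv_iff.mpr hB.star),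
    ?_, ?_⟩
  · rw [hconj, hY₀H, Matrix.mul_one, hUU]
  · rw [hconj, hspec]
    simp only [← Matrix.mul_assoc, hUU, Matrix.one_mul]
    simp only [Matrix.mul_assoc, hUU, Matrix.mul_one]

open scoped Norms.L2Operator in
theorem PosDef.inv_le_inv {P Q : Matrix ι ι ℂ} (hP : P.PosDef) (h : P ≤ Q) : Q⁻¹ ≤ P⁻¹ := by
  simpa only [nonsing_inv_eq_ringInverse] using
    CStarAlgebra.ringInverse_le_ringInverse h hP.isStrictlyPositive

theorem inv_real_smul {M : Matrix ι ι ℂ} (hM : IsUnit M) {c : ℝ} (hc : c ≠ 0) :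
    (c • M)⁻¹ = c⁻¹ • M⁻¹ := by
  have := inv_smul' (A := M) (Units.mk0 (c : ℂ) (Complex.ofReal_ne_zero.mpr hc))
    ((isUnit_iff_isUnit_det M).mp hM)
  simpa [← Complex.coe_smul, Units.smul_def] using this

theorem isUnit_of_posDef_realPart {A : Matrix ι ι ℂ} (hA : (ℜ A : Matrix ι ι ℂ).PosDef) :
    IsUnit A := by
  rw [isUnit_iff_isUnit_det, isUnit_iff_ne_zero]
  intro hdet
  obtain ⟨x, hx, hAx⟩ := exists_mulVec_eq_zero_iff.mpr hdet
  have := hA.dotProduct_mulVec_pos hx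
  rw [star_dotProduct_realPart_mulVec, hAx] at this
  simp at this

theorem realPart_inv {A : Matrix ι ι ℂ} (hA : IsUnit A) :
    (ℜ A⁻¹ : Matrix ι ι ℂ) = A⁻¹ * ℜ A * A⁻¹ᴴ := by
  have hAd := (isUnit_iff_isUnit_det A).mp hA
  have hAd' : IsUnit Aᴴ.det := by rw [det_conjTranspose]; exact hAd.star
  rw [realPart_apply_coe, realPart_apply_coe, Matrix.mul_smul, Matrix.smul_mul]
  congr 1
  simp only [star_eq_conjTranspose, Matrix.mul_add, Matrix.add_mul, nonsing_inv_mul _ hAd,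
    Matrix.one_mul, conjTranspose_nonsing_inv, mul_nonsing_inv_cancel_right _ _ hAd']
  rw [add_comm]

theorem mul_inv_realPart_mul_conjTranspose {A : Matrix ι ι ℂ}
    (hH : IsUnit (ℜ A : Matrix ι ι ℂ)) :
    A * (ℜ A : Matrix ι ι ℂ)⁻¹ * Aᴴ = ℜ A + ℑ A * (ℜ A : Matrix ι ι ℂ)⁻¹ * ℑ A := by
  set H : Matrix ι ι ℂ := ↑(ℜ A)
  set K : Matrix ι ι ℂ := ↑(ℑ A)
  have hHd := (isUnit_iff_isUnit_det H).mp hH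
  have hA : A = H + Complex.I • K := (realPart_add_I_smul_imaginaryPart A).symm
  have hAH : Aᴴ = H - Complex.I • K := by
    have hHH : Hᴴ = H := (ℜ A).2
    have hKH : Kᴴ = K := (ℑ A).2
    rw [hA, conjTranspose_add, conjTranspose_smul, hHH, hKH]
    simp [sub_eq_add_neg]
  rw [hAH, hA]
  simp only [Matrix.add_mul, Matrix.mul_sub, Matrix.smul_mul, Matrix.mul_smul,
    mul_nonsing_inv _ hHd, Matrix.one_mul, nonsing_inv_mul_cancel_right _ _ hHd]
  match_scalars <;> simp

theorem realPart_inv_le_inv_realPart {T : Matrix ι ι ℂ} (hT : (ℜ T : Matrix ι ι ℂ).PosDef) :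
    (ℜ T⁻¹ : Matrix ι ι ℂ) ≤ (ℜ T : Matrix ι ι ℂ)⁻¹ := by
  have hTu := isUnit_of_posDef_realPart hT
  have hle : (ℜ T : Matrix ι ι ℂ) ≤ T * (ℜ T : Matrix ι ι ℂ)⁻¹ * Tᴴ := by
    rw [mul_inv_realPart_mul_conjTranspose hT.isUnit]
    refine le_add_of_nonneg_right (nonneg_iff_posSemidef.mpr ?_)
    have hK : (ℑ T : Matrix ι ι ℂ)ᴴ = ℑ T := (ℑ T).2
    simpa only [hK] using hT.inv.posSemidef.conjTranspose_mul_mul_same (ℑ T : Matrix ι ι ℂ)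
  have := (isUnit_nonsing_inv_iff.mpr hTu).conjugate_le_conjugate_iff.mpr hle
  rwa [star_eq_conjTranspose, ← realPart_inv hTu, nonsing_inv_conj_cancel hTu] at this

end Complex

end Matrix

namespace SectorRange

variable {n : ℕ} {α : ℝ} {A B : Matrix (Fin n) (Fin n) ℂ}

theorem posDef_realPart (hA : SectorRange α A) : (ℜ A : Matrix (Fin n) (Fin n) ℂ).PosDef :=
  .of_dotProduct_mulVec_pos (ℜ A).2 fun x hx => by
    rw [star_dotProduct_realPart_mulVec]
    exact_mod_cast (hA x hx).1

theorem imaginaryPart_mul_inv_mul_le (hA : SectorRange α A) :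
    (ℑ A : Matrix (Fin n) (Fin n) ℂ) * (ℜ A : Matrix (Fin n) (Fin n) ℂ)⁻¹ * ℑ A ≤
      Real.tan α ^ 2 • (ℜ A : Matrix (Fin n) (Fin n) ℂ) := by
  obtain ⟨Y, d, hY, hYH, hYK⟩ := hA.posDef_realPart.exists_conj_eq_one_and_diagonal (ℑ A).2
  have hd (i : Fin n) : |d i| ≤ Real.tan α := by
    set x := Yᴴ *ᵥ Pi.single i 1
    have hx : x ≠ 0 := by
      have hYH : IsUnit Yᴴ := hY.star
      simpa [x] using
        (mulVec_injective_iff_isUnit.mpr hYH).ne (Pi.single_ne_zero_iff.mpr one_ne_zero)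
    -- at `x = Yᴴ eᵢ` the forms of `ℜ A` and `ℑ A` take the values `1` and `d i`
    have hre := star_dotProduct_mulVec_conjTranspose_single Y (ℜ A) i
    have him := star_dotProduct_mulVec_conjTranspose_single Y (ℑ A) i
    rw [star_dotProduct_realPart_mulVec, hYH, one_apply_eq, Complex.ofReal_eq_one] at hre
    rw [star_dotProduct_imaginaryPart_mulVec, hYK, diagonal_apply_eq] at him
    replace him : (star x ⬝ᵥ (A *ᵥ x)).im = d i := Complex.ofReal_injective him
    have := (hA x hx).2
    rwa [hre, him, mul_one] at this
  rw [← hY.conjugate_le_conjugate_iff, star_eq_conjTranspose, conj_mul_inv_mul hY,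
    Matrix.mul_smul, Matrix.smul_mul, hYH, hYK, inv_one, Matrix.mul_one, diagonal_mul_diagonal]
  calc (diagonal fun i => (d i : ℂ) * d i) = diagonal fun i => ((d i * d i : ℝ) : ℂ) := by
        push_cast; rfl
    _ ≤ diagonal fun _ => ((Real.tan α ^ 2 : ℝ) : ℂ) :=
        diagonal_ofReal_le_diagonal_ofReal (d := fun i => d i * d i) fun i => by
          rw [← sq, ← sq_abs]
          exact pow_le_pow_left₀ (abs_nonneg _) (hd i) 2
    _ = Real.tan α ^ 2 • 1 := by
        ext i j
        by_cases h : i = j <;> simp [h, one_apply]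

theorem inv_realPart_le (hA : SectorRange α A) :
    (ℜ A : Matrix (Fin n) (Fin n) ℂ)⁻¹ ≤
      (1 + Real.tan α ^ 2) • (ℜ A⁻¹ : Matrix (Fin n) (Fin n) ℂ) := by
  have hH := hA.posDef_realPart
  have hAu := isUnit_of_posDef_realPart hH
  have hle : A * (ℜ A : Matrix (Fin n) (Fin n) ℂ)⁻¹ * Aᴴ ≤
      (1 + Real.tan α ^ 2) • (ℜ A : Matrix (Fin n) (Fin n) ℂ) := by
    rw [mul_inv_realPart_mul_conjTranspose hH.isUnit, add_smul, one_smul]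
    exact add_le_add_right hA.imaginaryPart_mul_inv_mul_le _
  have := (isUnit_nonsing_inv_iff.mpr hAu).conjugate_le_conjugate_iff.mpr hle
  rwa [star_eq_conjTranspose, nonsing_inv_conj_cancel hAu, Matrix.mul_smul, Matrix.smul_mul,
    ← realPart_inv hAu] at this

theorem realPart_harmMean_le (hA : SectorRange α A) (hB : SectorRange α B) {t : ℝ}
    (ht0 : 0 ≤ t) (ht1 : t ≤ 1) :
    (ℜ (harmMean A B t) : Matrix (Fin n) (Fin n) ℂ) ≤
      (1 + Real.tan α ^ 2) • harmMean (ℜ A) (ℜ B) t := by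
  set c := 1 + Real.tan α ^ 2
  have hc : 0 < c := by positivity
  set T := (1 - t) • A⁻¹ + t • B⁻¹
  set N := (1 - t) • (ℜ A : Matrix (Fin n) (Fin n) ℂ)⁻¹ + t • (ℜ B : Matrix (Fin n) (Fin n) ℂ)⁻¹
  have hN : N.PosDef := hA.posDef_realPart.inv.smul_add_smul hB.posDef_realPart.inv ht0 ht1
  have hcN : (c⁻¹ • N).PosDef := hN.smul (inv_pos.mpr hc)
  have hNT : c⁻¹ • N ≤ ℜ T := by
    have : N ≤ c • (ℜ T : Matrix (Fin n) (Fin n) ℂ) := by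
      simp only [T, map_add, map_smul, AddSubgroup.coe_add, selfAdjoint.val_smul]
      rw [smul_add, smul_comm c (1 - t), smul_comm c t]
      exact add_le_add (smul_le_smul_of_nonneg_left hA.inv_realPart_le (by linarith))
        (smul_le_smul_of_nonneg_left hB.inv_realPart_le ht0)
    simpa [smul_smul, inv_mul_cancel₀ hc.ne'] using
      smul_le_smul_of_nonneg_left this (inv_nonneg.mpr hc.le)
  calc (ℜ (harmMean A B t) : Matrix (Fin n) (Fin n) ℂ) = ℜ T⁻¹ := rfl
    _ ≤ (ℜ T : Matrix (Fin n) (Fin n) ℂ)⁻¹ := realPart_inv_le_inv_realPart (hcN.of_le hNT)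
    _ ≤ (c⁻¹ • N)⁻¹ := hcN.inv_le_inv hNT
    _ = c • harmMean (ℜ A) (ℜ B) t := by
        rw [inv_real_smul hN.isUnit (inv_ne_zero hc.ne'), inv_inv]
        rfl

end SectorRange

theorem scalar_harmMean_le_refined {t r x : ℝ} (ht0 : 0 ≤ t) (ht1 : t ≤ 1) (hrt : r ≤ t)
    (hrt' : r ≤ 1 - t) (hx : 0 < x) :
    ((1 - t) + t * x⁻¹)⁻¹ ≤ (1 - t) + t * x - 2 * r * ((1 + x) / 2 - (2⁻¹ + 2⁻¹ * x⁻¹)⁻¹) := by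
  have hu : 0 < (1 - t) * x + t := by
    rcases ht1.lt_or_eq with h | rfl
    · nlinarith
    · simp
  have e1 : ((1 - t) + t * x⁻¹)⁻¹ = x / ((1 - t) * x + t) := by field_simp
  have e2 : (2⁻¹ + 2⁻¹ * x⁻¹ : ℝ)⁻¹ = 2 * x / (1 + x) := by
    field_simp
    ring
  have key : (1 - t) + t * x - 2 * r * ((1 + x) / 2 - 2 * x / (1 + x)) - x / ((1 - t) * x + t) =
      (t * (1 - t - r) + (1 - t) * (t - r) * x) * (1 - x) ^ 2 / (((1 - t) * x + t) * (1 + x)) := by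
    field_simp
    ring
  rw [e1, e2, ← sub_nonneg, key]
  refine div_nonneg (mul_nonneg ?_ (sq_nonneg _)) (by positivity)
  have : 0 ≤ t * (1 - t - r) := mul_nonneg ht0 (by linarith)
  have : 0 ≤ (1 - t) * (t - r) * x := mul_nonneg (mul_nonneg (by linarith) (by linarith)) hx.le
  linarith

section HarmonicMean

variable {n : ℕ}

theorem harmMean_conj {Y : Matrix (Fin n) (Fin n) ℂ} (hY : IsUnit Y)
    (H K : Matrix (Fin n) (Fin n) ℂ) (t : ℝ) :
    harmMean (Y * H * Yᴴ) (Y * K * Yᴴ) t = Y * harmMean H K t * Yᴴ := by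
  have hYd := (isUnit_iff_isUnit_det Y).mp hY
  have hYd' : IsUnit Yᴴ.det := by rw [det_conjTranspose]; exact hYd.star
  have hsum : (1 - t) • (Y * H * Yᴴ)⁻¹ + t • (Y * K * Yᴴ)⁻¹ =
      Yᴴ⁻¹ * ((1 - t) • H⁻¹ + t • K⁻¹) * Y⁻¹ := by
    simp only [Matrix.mul_inv_rev, Matrix.mul_add, Matrix.add_mul, Matrix.mul_smul,
      Matrix.smul_mul, Matrix.mul_assoc]
  rw [harmMean, hsum, Matrix.mul_inv_rev, Matrix.mul_inv_rev, nonsing_inv_nonsing_inv _ hYd,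
    nonsing_inv_nonsing_inv _ hYd', Matrix.mul_assoc, harmMean]

theorem harmMean_diagonal {e d : Fin n → ℝ} (he : ∀ i, 0 < e i) (hd : ∀ i, 0 < d i) {t : ℝ}
    (ht0 : 0 ≤ t) (ht1 : t ≤ 1) :
    harmMean (diagonal fun i => (e i : ℂ)) (diagonal fun i => (d i : ℂ)) t =
      diagonal fun i => ((((1 - t) * (e i)⁻¹ + t * (d i)⁻¹)⁻¹ : ℝ) : ℂ) := by
  have hpos (i : Fin n) : 0 < (1 - t) * (e i)⁻¹ + t * (d i)⁻¹ := by
    rcases ht1.lt_or_eq with h | rfl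
    · exact add_pos_of_pos_of_nonneg (mul_pos (sub_pos.mpr h) (inv_pos.mpr (he i)))
        (mul_nonneg ht0 (inv_pos.mpr (hd i)).le)
    · simpa using hd i
  have hsum : (1 - t) • (diagonal fun i => (e i : ℂ))⁻¹ + t • (diagonal fun i => (d i : ℂ))⁻¹ =
      diagonal fun i => (((1 - t) * (e i)⁻¹ + t * (d i)⁻¹ : ℝ) : ℂ) := by
    rw [inv_diagonal_of_ne_zero fun i => by exact_mod_cast (he i).ne',
      inv_diagonal_of_ne_zero fun i => by exact_mod_cast (hd i).ne']
    ext i j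
    by_cases h : i = j <;> simp [h]
  rw [harmMean, hsum, inv_diagonal_of_ne_zero fun i => by exact_mod_cast (hpos i).ne']
  push_cast
  rfl

theorem harmMean_le_refined {H K : Matrix (Fin n) (Fin n) ℂ} (hH : H.PosDef) (hK : K.PosDef)
    {t r : ℝ} (ht0 : 0 ≤ t) (ht1 : t ≤ 1) (hrt : r ≤ t) (hrt' : r ≤ 1 - t) :
    harmMean H K t ≤
      (1 - t) • H + t • K - (2 * r) • ((1 / 2 : ℝ) • (H + K) - harmMean H K (1 / 2)) := by
  obtain ⟨Y, d, hY, hYH, hYK⟩ := hH.exists_conj_eq_one_and_diagonal hK.isHermitian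
  have hd (i : Fin n) : 0 < d i := by
    have := (IsUnit.posDef_star_right_conjugate_iff hY).mpr hK
    rw [star_eq_conjTranspose, hYK, posDef_diagonal_iff] at this
    exact Complex.zero_lt_real.mp (this i)
  have h1 : (1 : Matrix (Fin n) (Fin n) ℂ) = diagonal fun _ => ((1 : ℝ) : ℂ) := by simp
  rw [← hY.conjugate_le_conjugate_iff, star_eq_conjTranspose]
  simp only [Matrix.mul_sub, Matrix.sub_mul, Matrix.mul_add, Matrix.add_mul, Matrix.mul_smul,
    Matrix.smul_mul, ← harmMean_conj hY, hYH, hYK]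
  rw [h1, harmMean_diagonal (fun _ => one_pos) hd ht0 ht1,
    harmMean_diagonal (fun _ => one_pos) hd (by norm_num) (by norm_num)]
  refine (diagonal_ofReal_le_diagonal_ofReal (e := fun i => (1 - t) + t * d i -
    2 * r * ((1 + d i) / 2 - (2⁻¹ + 2⁻¹ * (d i)⁻¹)⁻¹)) fun i => ?_).trans_eq ?_
  · simpa using scalar_harmMean_le_refined ht0 ht1 hrt hrt' (hd i)
  · ext i j
    by_cases h : i = j <;> simp [h]
    left
    ring

end HarmonicMean

theorem reMat_eq_realPart {n : ℕ} (A : Matrix (Fin n) (Fin n) ℂ) : reMat A = ℜ A := by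
  rw [realPart_apply_coe, reMat, one_div]
  rfl

/-- For `0 ≤ α < π/2` and `A, B` with numerical ranges in `S_α`,
`t ∈ [0,1]` and `r = min {t, 1-t}`, in the Loewner order:
`ℜ(A !_t B) ≤ sec²(α)(ℜ((1-t)A + tB) - 2r(ℜ((A+B)/2) - (ℜA) ! (ℜB)))`. -/
theorem stmt7 (n : ℕ) (α : ℝ) (hα0 : 0 ≤ α) (hα1 : α < Real.pi / 2)
    (A B : Matrix (Fin n) (Fin n) ℂ) (hA : SectorRange α A) (hB : SectorRange α B)
    (t : ℝ) (ht : t ∈ Set.Icc (0 : ℝ) 1) (r : ℝ) (hr : r = min t (1 - t)) :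
    ((1 / Real.cos α ^ 2) •
        (reMat ((1 - t) • A + t • B) -
          (2 * r) • (reMat ((1 / 2 : ℝ) • (A + B)) - harmMean (reMat A) (reMat B) (1 / 2))) -
      reMat (harmMean A B t)).PosSemidef := by
  obtain ⟨ht0, ht1⟩ := ht
  have hcos : Real.cos α ≠ 0 := (Real.cos_pos_of_mem_Ioo ⟨by linarith [Real.pi_pos], hα1⟩).ne'
  have hsec : 1 / Real.cos α ^ 2 = 1 + Real.tan α ^ 2 := by
    rw [one_div, ← Real.inv_one_add_tan_sq hcos, inv_inv]
  rw [← Matrix.le_iff, hsec]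
  simp only [reMat_eq_realPart, map_add, map_smul, AddSubgroup.coe_add, selfAdjoint.val_smul]
  have hrt : r ≤ t := hr ▸ min_le_left _ _
  have hrt' : r ≤ 1 - t := hr ▸ min_le_right _ _
  exact (hA.realPart_harmMean_le hB ht0 ht1).trans (smul_le_smul_of_nonneg_left
    (harmMean_le_refined hA.posDef_realPart hB.posDef_realPart ht0 ht1 hrt hrt') (by positivity))
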